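/- arXiv:1208.2859 — 4 statements merged into one kernel-verified Lean document; each statement's English description precedes it below -/
import Mathlib

section
/- Let w be a permutation with code c(w), and let i_0 = max{i : c_i ≠ 0} be the length of the code. If w has no descent in any position i > w^{-1}(1), then the number of boxes in the first column of the diagram of w equals i_0 (the length of the code). -/
/-!
With `p = w⁻¹ 0`, the absence of descents after `p` (together with `w p = 0`) makes `w`
increasing on `[p, n]`, so the code vanishes from `p` on. Before `p` it cannot vanish, since
`p` itself witnesses an inversion. Hence the code has length exactly `p`, and the first column
`{i < p : w i ≠ 0}` of the diagram is `{i : i < p}`, which also has `p` elements.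
-/

open Finset

/-- The code of a permutation: `c_i = #{j > i : w(j) < w(i)}`. -/
def permCode {n : ℕ} (w : Equiv.Perm (Fin n)) (i : Fin n) : ℕ :=
  (Finset.univ.filter fun j : Fin n => i < j ∧ w j < w i).card

lemma Fin.strictMonoOn_Ici_of_lt_succ {α : Type*} [Preorder α] {n : ℕ} {f : Fin (n + 1) → α}
    {p : Fin (n + 1)} (hf : ∀ i : Fin n, p ≤ i.castSucc → f i.castSucc < f i.succ) :
    StrictMonoOn f (Set.Ici p) := by
  refine strictMonoOn_of_lt_succ Set.ordConnected_Ici fun a ha hpa _ => ?_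
  obtain ⟨i, rfl⟩ := Fin.exists_castSucc_eq.2 fun h : a = Fin.last n => ha (h ▸ isMax_top)
  rw [Fin.orderSucc_castSucc]
  exact hf i hpa

lemma permCode_eq_zero_of_strictMonoOn {n : ℕ} {w : Equiv.Perm (Fin n)} {p i : Fin n}
    (hw : StrictMonoOn w (Set.Ici p)) (hpi : p ≤ i) : permCode w i = 0 := by
  rw [permCode, card_eq_zero, filter_eq_empty_iff]
  rintro j - ⟨hij, hwji⟩
  exact (hw hpi (hpi.trans hij.le) hij).not_gt hwji

lemma permCode_ne_zero_of_lt {n : ℕ} {w : Equiv.Perm (Fin (n + 1))} {p i : Fin (n + 1)}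
    (hp : w p = 0) (hi : i < p) : permCode w i ≠ 0 := by
  refine card_ne_zero_of_mem (a := p) (mem_filter.2 ⟨mem_univ _, hi, ?_⟩)
  rw [hp, Fin.pos_iff_ne_zero, ← hp]
  exact w.injective.ne hi.ne

lemma card_filter_pos_apply_lt {n : ℕ} {w : Equiv.Perm (Fin (n + 1))} {p : Fin (n + 1)}
    (hp : w p = 0) : #{i | 0 < w i ∧ i < p} = (p : ℕ) := by
  rw [← Fin.card_Iio]
  congr 1
  ext i
  simp only [mem_filter, mem_univ, true_and, mem_Iio, and_iff_right_iff_imp]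
  intro hi
  rw [Fin.pos_iff_ne_zero, ← hp]
  exact w.injective.ne hi.ne

/-- Let `i₀` be the largest index with nonzero code entry (so the length of the code of
`w` is `i₀ + 1` when `0`-indexed).  If `w` has no descent in any position strictly after
the position of the value `1`, then the number of boxes in the first column of the
diagram of `w` equals the length of the code. -/
theorem stmt7 (n : ℕ) (w : Equiv.Perm (Fin (n + 1))) (i₀ : Fin (n + 1))
    (h1 : permCode w i₀ ≠ 0) (h2 : ∀ j, i₀ < j → permCode w j = 0)
    (hnd : ∀ i : Fin n, ((w⁻¹ 0 : Fin (n + 1)) : ℕ) < (i : ℕ) →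
      ¬ w i.succ < w i.castSucc) :
    (Finset.univ.filter fun i : Fin (n + 1) =>
        (0 : Fin (n + 1)) < w i ∧ i < w⁻¹ 0).card = (i₀ : ℕ) + 1 := by
  set p := w⁻¹ 0
  have hwp : w p = 0 := w.apply_symm_apply 0
  have hmono : StrictMonoOn w (Set.Ici p) := Fin.strictMonoOn_Ici_of_lt_succ fun i hpi => by
    refine lt_of_le_of_ne ?_ (w.injective.ne Fin.castSucc_lt_succ.ne)
    rcases hpi.eq_or_lt with h | h
    · rw [← h, hwp]
      exact Fin.zero_le _
    · exact not_lt.1 (hnd i h)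
  have hi₀ : i₀ < p := lt_of_not_ge fun h => h1 (permCode_eq_zero_of_strictMonoOn hmono h)
  have hp : (p : ℕ) = i₀ + 1 := by
    refine le_antisymm (not_lt.1 fun h => ?_) hi₀
    exact permCode_ne_zero_of_lt hwp (i := ⟨i₀ + 1, by omega⟩) h
      (h2 _ (Fin.lt_def.2 (Nat.lt_succ_self _)))
  rw [card_filter_pos_apply_lt hwp, hp]
end

section
/- Let w ∈ S_n be a permutation with w ≠ identity, let r be the largest descent of w and let s be the largest index with w(s) < w(r). Then r < s, ℓ(w t_{rs}) = ℓ(w) - 1, and for any j < r such that ℓ(w t_{rs} t_{jr}) = ℓ(w), the permutation v = w t_{rs} t_{jr} satisfies: the largest descent of v is at most r. -/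
/-!
Right multiplication by `t_{ab}` exchanges the values in positions `a < b`. Relabelling positions
by `t_{ab}` matches the inversions of `w t_{ab}` with those of `w`, except for the pairs whose
relative order `t_{ab}` reverses: `(a, b)` and `(a, k)`, `(k, b)` with `a < k < b`. If `w b < w a`
and every value strictly between positions `a` and `b` is below `w b`, then `(a, b)` is an
inversion of `w` but not of `w t_{ab}`, each `(a, k)` is an inversion of both and each `(k, b)` of
neither; hence the length drops by exactly one.

Since `w (r + 1) < w r`, the index `s` lies to the right of `r`. Beyond its last descent `w` is
increasing, so every position strictly between `r` and `s` carries a value below `w s`, and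
exchanging `w r` and `w s` keeps the values right of `r` increasing. A further transposition
`t_{jr}` with `j < r` does not touch them.
-/

/-- The length of a permutation: its number of inversions. -/
def permLength {n : ℕ} (w : Equiv.Perm (Fin n)) : ℕ :=
  (Finset.univ.filter fun p : Fin n × Fin n => p.1 < p.2 ∧ w p.2 < w p.1).card

open Finset Equiv

theorem permLength_mul {m : ℕ} (w σ : Perm (Fin m)) :
    permLength (w * σ) = #{y : Fin m × Fin m | σ⁻¹ y.1 < σ⁻¹ y.2 ∧ w y.2 < w y.1} :=
  card_equiv (σ.prodCongr σ) fun x => by simp only [mem_filter]; simp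

theorem permLength_mul_swap_add_one {m : ℕ} {w : Perm (Fin m)} {a b : Fin m} (hab : a < b)
    (hw : w b < w a) (hbetween : ∀ k, a < k → k < b → w k < w b) :
    permLength (w * swap a b) + 1 = permLength w := by
  rw [permLength_mul, swap_inv, permLength]
  have hab_mem : (a, b) ∈ ({y | y.1 < y.2 ∧ w y.2 < w y.1} : Finset (Fin m × Fin m)) := by
    simp [hab, hw]
  rw [← card_erase_add_one hab_mem]
  congr 1
  -- For `a < k < b` the pair `(a, k)` counts on the right but not on the left, `(b, k)` the
  -- other way round.
  refine card_nbij' (fun y => if y.1 = b ∧ a < y.2 ∧ y.2 < b then (a, y.2) else y)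
    (fun y => if y.1 = a ∧ y.2 < b then (b, y.2) else y) ?_ ?_ ?_ ?_
  all_goals
    rintro ⟨p, q⟩ h
    simp only [coe_filter, coe_erase, Set.mem_sdiff, Set.mem_singleton_iff, Set.mem_ofPred_eq,
      swap_apply_def] at h ⊢
    split_ifs at h ⊢ <;> grind

theorem strictMonoOn_Ioi_castSucc_of_forall_not_lt {n : ℕ} {α : Type*} [LinearOrder α]
    {f : Fin (n + 1) → α} (hf : Function.Injective f) {r : Fin n}
    (hr : ∀ i : Fin n, r < i → ¬ f i.succ < f i.castSucc) :
    StrictMonoOn f (Set.Ioi r.castSucc) := by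
  refine strictMonoOn_of_lt_succ Set.ordConnected_Ioi fun a ha_max ha _ => ?_
  obtain ⟨i, rfl⟩ := Fin.eq_castSucc_of_ne_last (x := a) fun h => ha_max (h ▸ isMax_top)
  rw [Fin.orderSucc_castSucc]
  exact (not_lt.1 (hr i (Fin.castSucc_lt_castSucc_iff.1 ha))).lt_of_ne
    (hf.ne Fin.castSucc_lt_succ.ne)

theorem not_mul_swap_apply_succ_lt_of_lt {n : ℕ} {w : Perm (Fin (n + 1))} {r : Fin n}
    {s : Fin (n + 1)}
    (hrmax : ∀ i : Fin n, r < i → ¬ w i.succ < w i.castSucc)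
    (hrs : r.castSucc < s) (hs : w s < w r.castSucc)
    (hsmax : ∀ i : Fin (n + 1), s < i → ¬ w i < w r.castSucc)
    (i : Fin n) (hri : r < i) :
    ¬ (w * swap r.castSucc s) i.succ < (w * swap r.castSucc s) i.castSucc := by
  have hmono := strictMonoOn_Ioi_castSucc_of_forall_not_lt w.injective hrmax
  have hi : r.castSucc < i.castSucc := Fin.castSucc_lt_castSucc_iff.2 hri
  have hi' : r.castSucc < i.succ := hi.trans Fin.castSucc_lt_succ
  simp only [Perm.mul_apply]
  intro hdes
  rcases eq_or_ne i.succ s with rfl | his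
  · rw [swap_apply_right, swap_apply_of_ne_of_ne hi.ne' Fin.castSucc_lt_succ.ne] at hdes
    exact lt_irrefl _ (hdes.trans ((hmono hi hi' Fin.castSucc_lt_succ).trans hs))
  rcases eq_or_ne i.castSucc s with rfl | hics
  · rw [swap_apply_right, swap_apply_of_ne_of_ne hi'.ne' his] at hdes
    exact hsmax i.succ Fin.castSucc_lt_succ hdes
  · rw [swap_apply_of_ne_of_ne hi'.ne' his, swap_apply_of_ne_of_ne hi.ne' hics] at hdes
    exact hrmax i hri hdes

theorem stmt8_general (n : ℕ) (w : Equiv.Perm (Fin (n + 1)))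
    (r : Fin n) (hr : w r.succ < w r.castSucc)
    (hrmax : ∀ i : Fin n, r < i → ¬ w i.succ < w i.castSucc)
    (s : Fin (n + 1)) (hs : w s < w r.castSucc)
    (hsmax : ∀ i : Fin (n + 1), s < i → ¬ w i < w r.castSucc) :
    r.castSucc < s ∧
    permLength (w * Equiv.swap r.castSucc s) + 1 = permLength w ∧
    ∀ j : Fin (n + 1), j < r.castSucc →
      permLength (w * Equiv.swap r.castSucc s * Equiv.swap j r.castSucc) = permLength w →
      ∀ i : Fin n,
        (w * Equiv.swap r.castSucc s * Equiv.swap j r.castSucc) i.succ <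
          (w * Equiv.swap r.castSucc s * Equiv.swap j r.castSucc) i.castSucc →
        i ≤ r := by
  have hrs : r.castSucc < s :=
    lt_of_not_ge fun hsr => hsmax r.succ (hsr.trans_lt Fin.castSucc_lt_succ) hr
  have hmono := strictMonoOn_Ioi_castSucc_of_forall_not_lt w.injective hrmax
  refine ⟨hrs, permLength_mul_swap_add_one hrs hs fun k hk hks => hmono hk hrs hks, ?_⟩
  intro j hj _ i hdes
  by_contra! hri
  have hfix : ∀ x, r.castSucc < x →
      (w * swap r.castSucc s * swap j r.castSucc) x = (w * swap r.castSucc s) x := fun x hx => by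
    rw [Perm.mul_apply _ (swap j _), swap_apply_of_ne_of_ne (hj.trans hx).ne' hx.ne']
  have hi : r.castSucc < i.castSucc := Fin.castSucc_lt_castSucc_iff.2 hri
  rw [hfix _ hi, hfix _ (hi.trans Fin.castSucc_lt_succ)] at hdes
  exact not_mul_swap_apply_succ_lt_of_lt hrmax hrs hs hsmax i hri hdes

/-- Maximal transition: let `w ≠ 1`, let `r` be the largest descent of `w` and `s` the
largest index with `w(s) < w(r)`.  Then `r < s`, `ℓ(w t_{rs}) = ℓ(w) - 1`, and for any
`j < r` with `ℓ(w t_{rs} t_{jr}) = ℓ(w)`, the largest descent of `v = w t_{rs} t_{jr}`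
is at most `r`. -/
theorem stmt8 (n : ℕ) (w : Equiv.Perm (Fin (n + 1))) (hw : w ≠ 1)
    (r : Fin n) (hr : w r.succ < w r.castSucc)
    (hrmax : ∀ i : Fin n, r < i → ¬ w i.succ < w i.castSucc)
    (s : Fin (n + 1)) (hs : w s < w r.castSucc)
    (hsmax : ∀ i : Fin (n + 1), s < i → ¬ w i < w r.castSucc) :
    r.castSucc < s ∧
    permLength (w * Equiv.swap r.castSucc s) + 1 = permLength w ∧
    ∀ j : Fin (n + 1), j < r.castSucc →
      permLength (w * Equiv.swap r.castSucc s * Equiv.swap j r.castSucc) = permLength w →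
      ∀ i : Fin n,
        (w * Equiv.swap r.castSucc s * Equiv.swap j r.castSucc) i.succ <
          (w * Equiv.swap r.castSucc s * Equiv.swap j r.castSucc) i.castSucc →
        i ≤ r :=
  stmt8_general n w r hr hrmax s hs hsmax
end

section
/- Let w ∈ S_N and let (b¹, b²) be a good pair of length p = ℓ(w). Then the number of pairs (a, i) with a a reduced word of w and i an a-compatible sequence with i = b² is at most the number of such pairs with i = b¹. (Equivalently, in the Schubert polynomial 𝔖_w, the coefficient of the monomial X_{b¹} is at least the coefficient of X_{b²}.) -/
/-!
If `b²` is `a`-compatible then so is `b¹`: it is weakly increasing, `b¹ ≤ b² ≤ a`, and `b¹`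
increases strictly wherever `b²` does, in particular wherever `a` does. So the pairs counted for
`b²` are among those counted for `b¹`, and it remains to see that `w` has only finitely many
reduced words.

For that we measure length by inversion sets. Left multiplication by `sₖ` adds or removes exactly
one inversion, and bubble sort writes `w` as a word of length `#Inv(w)`, so along a reduced word
every letter adds an inversion, and that inversion survives in `w`. Reading the word from the
right, the first letter `k` with `k + 1 ≥ N` would create an inversion `(i, k + 1)` (the letters
to its right fix `k + 1`), but an inversion of `w` never involves a position `≥ N`. Hence all
letters of reduced words are `< N`.
-/

/-- `i` is an `a`-compatible sequence. -/
def Compatible {p : ℕ} (a i : Fin p → ℕ) : Prop :=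
  Monotone i ∧ (∀ j, i j ≤ a j) ∧
    ∀ (j : Fin p) (h : (j : ℕ) + 1 < p),
      a j < a ⟨(j : ℕ) + 1, h⟩ → i j < i ⟨(j : ℕ) + 1, h⟩

/-- The product of simple transpositions (`s_k = (k, k+1)`, 0-indexed) of a word. -/
def wordProd {p : ℕ} (a : Fin p → ℕ) : Equiv.Perm ℕ :=
  (List.ofFn fun j => Equiv.swap (a j) (a j + 1)).prod

/-- `a` is a reduced word for `w`: a word for `w` of minimal length. -/
def IsReducedWord {p : ℕ} (w : Equiv.Perm ℕ) (a : Fin p → ℕ) : Prop :=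
  wordProd a = w ∧ ∀ (q : ℕ) (b : Fin q → ℕ), wordProd b = w → p ≤ q

/-- `(b¹, b²)` is a good pair of (weakly increasing) sequences. -/
def GoodPair {p : ℕ} (b1 b2 : Fin p → ℕ) : Prop :=
  Monotone b1 ∧ Monotone b2 ∧ (∀ i, b1 i ≤ b2 i) ∧
    ∀ (i : Fin p) (h : (i : ℕ) + 1 < p),
      (b1 i < b1 ⟨(i : ℕ) + 1, h⟩ ↔ b2 i < b2 ⟨(i : ℕ) + 1, h⟩)

open Equiv

def List.swapProd (l : List ℕ) : Equiv.Perm ℕ := (l.map fun k => Equiv.swap k (k + 1)).prod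

theorem List.swapProd_cons (k : ℕ) (l : List ℕ) :
    (k :: l).swapProd = Equiv.swap k (k + 1) * l.swapProd := by
  simp [List.swapProd]

theorem List.swapProd_apply_of_le {l : List ℕ} {N x : ℕ} (hl : ∀ k ∈ l, k + 1 < N)
    (hx : N ≤ x) : l.swapProd x = x := by
  induction l with
  | nil => rfl
  | cons k l ih =>
    have hk := hl k List.mem_cons_self
    rw [List.swapProd_cons, Equiv.Perm.mul_apply, ih fun j hj => hl j (List.mem_cons_of_mem _ hj),
      swap_apply_of_ne_of_ne (by omega) (by omega)]

theorem wordProd_eq_swapProd {p : ℕ} (a : Fin p → ℕ) : wordProd a = (List.ofFn a).swapProd := by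
  rw [wordProd, List.swapProd, List.map_ofFn]
  rfl

namespace Equiv.Perm

/-- Inversions of `u`, recorded by positions. -/
def invSet (u : Perm ℕ) : Set (ℕ × ℕ) := {q | q.1 < q.2 ∧ u q.2 < u q.1}

variable {u : Perm ℕ} {k N : ℕ}

theorem invSet_one : invSet 1 = ∅ := by
  ext ⟨x, y⟩
  simp only [invSet, Set.mem_ofPred_eq, one_apply, Set.mem_empty_iff_false, iff_false]
  omega

theorem inv_mk_notMem_invSet {a b : ℕ} (h : a ≤ b) : (u⁻¹ a, u⁻¹ b) ∉ invSet u := by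
  simp [invSet, h]

theorem snd_lt_of_mem_invSet (hu : ∀ x, N ≤ x → u x = x) {q : ℕ × ℕ} (hq : q ∈ invSet u) :
    q.2 < N := by
  obtain ⟨hlt, hinv⟩ := hq
  by_contra! hN
  rw [hu q.2 hN] at hinv
  have hfix : u q.1 = q.1 := u.injective (hu (u q.1) (by omega))
  omega

theorem eq_one_of_strictMono (hu : StrictMono u) : u = 1 := by
  have hinv : StrictMono ⇑u⁻¹ := fun x y hxy => by
    rwa [← hu.lt_iff_lt, ← mul_apply, ← mul_apply, mul_inv_cancel, one_apply, one_apply]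
  ext n
  have h₁ : n ≤ u n := hu.id_le n
  have h₂ : u n ≤ n := by simpa using hu.monotone (hinv.id_le n)
  simp [le_antisymm h₂ h₁]

theorem eq_one_of_invSet_eq_empty (h : invSet u = ∅) : u = 1 := by
  refine eq_one_of_strictMono fun x y hxy => lt_of_le_of_ne ?_ (u.injective.ne hxy.ne)
  by_contra! hyx
  exact (Set.eq_empty_iff_forall_notMem.mp h) (x, y) ⟨hxy, hyx⟩

theorem exists_inv_succ_lt_inv_of_ne_one (hu : u ≠ 1) : ∃ k, u⁻¹ (k + 1) < u⁻¹ k := by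
  by_contra! hmono
  refine hu (inv_eq_one.mp (eq_one_of_strictMono (strictMono_nat_of_lt_succ fun k => ?_)))
  exact lt_of_le_of_ne (hmono k) (u⁻¹.injective.ne k.succ_ne_self.symm)

theorem inv_lt_or_inv_gt (u : Perm ℕ) (k : ℕ) : u⁻¹ k < u⁻¹ (k + 1) ∨ u⁻¹ (k + 1) < u⁻¹ k :=
  lt_or_gt_of_ne (u⁻¹.injective.ne k.succ_ne_self.symm)

theorem invSet_swap_mul_of_lt (h : u⁻¹ k < u⁻¹ (k + 1)) :
    invSet (swap k (k + 1) * u) = insert (u⁻¹ k, u⁻¹ (k + 1)) (invSet u) := by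
  ext ⟨x, y⟩
  have hx : u x = k ↔ x = u⁻¹ k := eq_inv_iff_eq.symm
  have hy : u y = k + 1 ↔ y = u⁻¹ (k + 1) := eq_inv_iff_eq.symm
  have hx' : u x = k + 1 ↔ x = u⁻¹ (k + 1) := eq_inv_iff_eq.symm
  have hy' : u y = k ↔ y = u⁻¹ k := eq_inv_iff_eq.symm
  have hxy : u x = u y ↔ x = y := u.injective.eq_iff
  simp only [invSet, Set.mem_ofPred_eq, Set.mem_insert_iff, Prod.mk.injEq, mul_apply,
    swap_apply_def]
  split_ifs <;> omega

theorem invSet_swap_mul_subset_of_gt (h : u⁻¹ (k + 1) < u⁻¹ k) :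
    invSet (swap k (k + 1) * u) ⊆ invSet u := by
  have := invSet_swap_mul_of_lt (u := swap k (k + 1) * u) (k := k) (by simpa using h)
  rw [swap_mul_self_mul] at this
  exact this ▸ Set.subset_insert _ _

theorem ncard_invSet_swap_mul_of_lt (hu : (invSet u).Finite) (h : u⁻¹ k < u⁻¹ (k + 1)) :
    (invSet (swap k (k + 1) * u)).ncard = (invSet u).ncard + 1 := by
  rw [invSet_swap_mul_of_lt h, Set.ncard_insert_of_notMem (inv_mk_notMem_invSet k.le_succ) hu]

theorem ncard_invSet_swap_mul_of_gt (hu : (invSet u).Finite) (h : u⁻¹ (k + 1) < u⁻¹ k) :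
    (invSet (swap k (k + 1) * u)).ncard + 1 = (invSet u).ncard := by
  have := ncard_invSet_swap_mul_of_lt (u := swap k (k + 1) * u) (k := k)
    (hu.subset (invSet_swap_mul_subset_of_gt h)) (by simpa using h)
  rw [swap_mul_self_mul] at this
  exact this.symm

theorem finite_invSet_swap_mul (hu : (invSet u).Finite) :
    (invSet (swap k (k + 1) * u)).Finite := by
  rcases inv_lt_or_inv_gt u k with h | h
  · exact invSet_swap_mul_of_lt h ▸ hu.insert _
  · exact hu.subset (invSet_swap_mul_subset_of_gt h)

theorem exists_swapProd_eq {n : ℕ} (hu : (invSet u).Finite) (hn : (invSet u).ncard = n) :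
    ∃ l : List ℕ, l.swapProd = u ∧ l.length = n := by
  induction n generalizing u with
  | zero =>
    exact ⟨[], by rw [eq_one_of_invSet_eq_empty ((Set.ncard_eq_zero hu).mp hn)]; rfl, rfl⟩
  | succ n ih =>
    have hne : u ≠ 1 := by rintro rfl; simp [invSet_one] at hn
    obtain ⟨k, hk⟩ := exists_inv_succ_lt_inv_of_ne_one hne
    obtain ⟨l, hl, hlen⟩ := ih (finite_invSet_swap_mul (k := k) hu)
      (by have := ncard_invSet_swap_mul_of_gt hu hk; omega)
    refine ⟨k :: l, ?_, by simp [hlen]⟩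
    rw [List.swapProd_cons, hl, swap_mul_self_mul]

end Equiv.Perm

open Perm

section Reduced

variable {k N : ℕ}

theorem finite_invSet_swapProd (l : List ℕ) : (invSet l.swapProd).Finite := by
  induction l with
  | nil => simp [List.swapProd, invSet_one]
  | cons k l ih => exact List.swapProd_cons k l ▸ finite_invSet_swap_mul ih

theorem ncard_invSet_swapProd_le (l : List ℕ) : (invSet l.swapProd).ncard ≤ l.length := by
  induction l with
  | nil => simp [List.swapProd, invSet_one]
  | cons k l ih =>
    rw [List.swapProd_cons, List.length_cons]
    rcases inv_lt_or_inv_gt l.swapProd k with h | h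
    · rw [ncard_invSet_swap_mul_of_lt (finite_invSet_swapProd l) h]
      omega
    · have := ncard_invSet_swap_mul_of_gt (finite_invSet_swapProd l) h
      omega

theorem inv_lt_inv_of_ncard_invSet_swapProd_cons {l : List ℕ}
    (h : (invSet (k :: l).swapProd).ncard = (k :: l).length) :
    l.swapProd⁻¹ k < l.swapProd⁻¹ (k + 1) ∧ (invSet l.swapProd).ncard = l.length := by
  rw [List.swapProd_cons, List.length_cons] at h
  have hle := ncard_invSet_swapProd_le l
  rcases inv_lt_or_inv_gt l.swapProd k with hk | hk
  · rw [ncard_invSet_swap_mul_of_lt (finite_invSet_swapProd l) hk] at h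
    exact ⟨hk, by omega⟩
  · have := ncard_invSet_swap_mul_of_gt (finite_invSet_swapProd l) hk
    omega

theorem invSet_swapProd_suffix_of_ncard_eq (l₁ l₂ : List ℕ)
    (h : (invSet (l₁ ++ l₂).swapProd).ncard = (l₁ ++ l₂).length) :
    (invSet l₂.swapProd).ncard = l₂.length ∧ invSet l₂.swapProd ⊆ invSet (l₁ ++ l₂).swapProd := by
  induction l₁ with
  | nil => exact ⟨h, subset_rfl⟩
  | cons k l₁ ih =>
    obtain ⟨hk, hred⟩ := inv_lt_inv_of_ncard_invSet_swapProd_cons (l := l₁ ++ l₂) h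
    refine ⟨(ih hred).1, (ih hred).2.trans ?_⟩
    rw [List.cons_append, List.swapProd_cons, invSet_swap_mul_of_lt hk]
    exact Set.subset_insert _ _

theorem mem_invSet_swapProd_of_ncard_eq (l₁ l₂ : List ℕ)
    (h : (invSet (l₁ ++ k :: l₂).swapProd).ncard = (l₁ ++ k :: l₂).length) :
    (l₂.swapProd⁻¹ k, l₂.swapProd⁻¹ (k + 1)) ∈ invSet (l₁ ++ k :: l₂).swapProd := by
  obtain ⟨hred, hsub⟩ := invSet_swapProd_suffix_of_ncard_eq l₁ (k :: l₂) h
  apply hsub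
  rw [List.swapProd_cons, invSet_swap_mul_of_lt (inv_lt_inv_of_ncard_invSet_swapProd_cons hred).1]
  exact Set.mem_insert _ _

theorem add_one_lt_of_mem_of_ncard_eq {l : List ℕ} (hfix : ∀ x, N ≤ x → l.swapProd x = x)
    (h : (invSet l.swapProd).ncard = l.length) : ∀ k ∈ l, k + 1 < N := by
  suffices ∀ l₂ l₁, l = l₁ ++ l₂ → ∀ k ∈ l₂, k + 1 < N from this l [] rfl
  intro l₂
  induction l₂ with
  | nil => simp
  | cons k l₂ ih =>
    intro l₁ hl
    have hl₂ := ih (l₁ ++ [k]) (by simp [hl])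
    refine List.forall_mem_cons.mpr ⟨?_, hl₂⟩
    by_contra! hk
    have hk₁ : l₂.swapProd⁻¹ (k + 1) = k + 1 :=
      inv_eq_iff_eq.mpr (List.swapProd_apply_of_le hl₂ hk).symm
    subst hl
    have := snd_lt_of_mem_invSet hfix (mem_invSet_swapProd_of_ncard_eq l₁ l₂ h)
    rw [hk₁] at this
    omega

end Reduced

section ReducedWord

variable {N p : ℕ} {w : Perm ℕ} {a : Fin p → ℕ}

theorem ncard_invSet_of_isReducedWord (ha : IsReducedWord w a) : (invSet w).ncard = p := by
  obtain ⟨rfl, hmin⟩ := ha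
  rw [wordProd_eq_swapProd]
  refine le_antisymm (by simpa using ncard_invSet_swapProd_le (List.ofFn a)) ?_
  obtain ⟨l, hl, hlen⟩ := exists_swapProd_eq (finite_invSet_swapProd (List.ofFn a)) rfl
  rw [← hlen]
  refine hmin l.length l.get ?_
  rw [wordProd_eq_swapProd, wordProd_eq_swapProd, List.ofFn_get, hl]

theorem add_one_lt_of_isReducedWord (hsupp : ∀ k, N ≤ k → w k = k) (ha : IsReducedWord w a)
    (j : Fin p) : a j + 1 < N := by
  have hred := ncard_invSet_of_isReducedWord ha
  rw [← ha.1, wordProd_eq_swapProd] at hsupp hred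
  exact add_one_lt_of_mem_of_ncard_eq hsupp (by simpa using hred) _ (List.mem_ofFn.mpr ⟨j, rfl⟩)

theorem finite_setOf_isReducedWord (hsupp : ∀ k, N ≤ k → w k = k) :
    {a : Fin p → ℕ | IsReducedWord w a}.Finite :=
  (Set.Finite.pi fun _ => Set.finite_Iio N).subset fun _ ha j _ =>
    Set.mem_Iio.mpr (Nat.lt_of_succ_lt (add_one_lt_of_isReducedWord hsupp ha j))

end ReducedWord

theorem Compatible.of_goodPair {p : ℕ} {a b₁ b₂ : Fin p → ℕ} (hb : GoodPair b₁ b₂)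
    (h : Compatible a b₂) : Compatible a b₁ :=
  ⟨hb.1, fun j => (hb.2.2.1 j).trans (h.2.1 j), fun j hj ha => (hb.2.2.2 j hj).mpr (h.2.2 j hj ha)⟩

theorem stmt13_general (N p : ℕ) (w : Equiv.Perm ℕ) (hsupp : ∀ k, N ≤ k → w k = k)
    (b1 b2 : Fin p → ℕ) (hb : GoodPair b1 b2) :
    Set.ncard {a : Fin p → ℕ | IsReducedWord w a ∧ Compatible a b2} ≤
      Set.ncard {a : Fin p → ℕ | IsReducedWord w a ∧ Compatible a b1} :=
  Set.ncard_le_ncard (fun _ ha => ⟨ha.1, ha.2.of_goodPair hb⟩)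
    ((finite_setOf_isReducedWord hsupp).subset fun _ ha => ha.1)

/-- Let `w ∈ S_N` and `(b¹, b²)` a good pair of length `p = ℓ(w)` (expressed by the
existence of a reduced word of `w` of length `p`).  The number of pairs (reduced word
`a` of `w`, `a`-compatible sequence equal to `b²`) is at most the corresponding number
for `b¹`; i.e. in `𝔖_w` the coefficient of `X_{b¹}` is at least that of `X_{b²}`. -/
theorem stmt13 (N p : ℕ) (w : Equiv.Perm ℕ) (hsupp : ∀ k, N ≤ k → w k = k)
    (hp : ∃ a : Fin p → ℕ, IsReducedWord w a)
    (b1 b2 : Fin p → ℕ) (hb : GoodPair b1 b2) :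
    Set.ncard {a : Fin p → ℕ | IsReducedWord w a ∧ Compatible a b2} ≤
      Set.ncard {a : Fin p → ℕ | IsReducedWord w a ∧ Compatible a b1} :=
  stmt13_general N p w hsupp b1 b2 hb
end

section
/- Let u be a permutation and n ≥ 1, and let (b¹, b²) be a good-n pair of length p = ℓ(u). Then in the Schubert polynomial 𝔖_{1^n × u}, the coefficients of the monomials X_{b¹} and X_{b²} are equal. -/
/-- The permutation `1^n × w`: `n` fixed points prepended to `w` (0-indexed). -/
def shiftP (n : ℕ) (w : Equiv.Perm ℕ) : Equiv.Perm ℕ where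
  toFun k := if k < n then k else w (k - n) + n
  invFun k := if k < n then k else w⁻¹ (k - n) + n
  left_inv k := by
    by_cases h : k < n
    · simp [h]
    · have h2 : ¬ (w (k - n) + n < n) := by omega
      simp only [if_neg h, if_neg h2, Nat.add_sub_cancel, (by simp : w⁻¹ (w (k - n)) = k - n)]
      omega
  right_inv k := by
    by_cases h : k < n
    · simp [h]
    · have h2 : ¬ (w⁻¹ (k - n) + n < n) := by omega
      simp only [if_neg h, if_neg h2, Nat.add_sub_cancel, (by simp : w (w⁻¹ (k - n)) = k - n)]
      omega

/-!
Write `s_k` for the transposition `(k, k+1)`. Since `1^n × u` fixes `0, …, n-1`, no letter of a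
reduced word for it is `< n`: otherwise let `m < n` be the smallest letter, and split the word at
the last occurrence of `m` as `s ++ [m] ++ t`. All letters of `t` exceed `m`, so the product of
`s` sends `m + 1` to `m` while preserving `[m, ∞)`; the exchange property then deletes a letter
of `s` against the `s_m`, giving a word two letters shorter. Consequently every entry of a
good-`n` pair lies strictly below every letter, the condition `i ≤ a` of compatibility holds
automatically, and `b¹`, `b²` are compatible with exactly the same reduced words.
-/

def swapsProd (l : List ℕ) : Equiv.Perm ℕ :=
  (l.map fun k => Equiv.swap k (k + 1)).prod

@[simp]
lemma swapsProd_nil : swapsProd [] = 1 := rfl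

@[simp]
lemma swapsProd_cons (k : ℕ) (l : List ℕ) :
    swapsProd (k :: l) = Equiv.swap k (k + 1) * swapsProd l := by
  simp [swapsProd]

@[simp]
lemma swapsProd_append (l₁ l₂ : List ℕ) :
    swapsProd (l₁ ++ l₂) = swapsProd l₁ * swapsProd l₂ := by
  simp [swapsProd]

lemma wordProd_eq_swapsProd {p : ℕ} (a : Fin p → ℕ) : wordProd a = swapsProd (List.ofFn a) := by
  simp [wordProd, swapsProd, List.map_ofFn, Function.comp_def]

lemma swapsProd_apply_of_forall_lt {m : ℕ} {l : List ℕ} (h : ∀ k ∈ l, m < k) :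
    swapsProd l m = m := by
  induction l with
  | nil => rfl
  | cons k l ih =>
    have hk : m < k := h k List.mem_cons_self
    rw [swapsProd_cons, Equiv.Perm.mul_apply, ih fun x hx => h x (List.mem_cons_of_mem k hx),
      Equiv.swap_apply_of_ne_of_ne (by omega) (by omega)]

lemma le_swapsProd_apply {m x : ℕ} {l : List ℕ} (h : ∀ k ∈ l, m ≤ k) (hx : m ≤ x) :
    m ≤ swapsProd l x := by
  induction l with
  | nil => exact hx
  | cons k l ih =>
    have hk : m ≤ k := h k List.mem_cons_self
    have hl := ih fun x hx => h x (List.mem_cons_of_mem k hx)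
    rw [swapsProd_cons, Equiv.Perm.mul_apply, Equiv.swap_apply_def]
    split_ifs <;> omega

/-- The exchange property: a word whose product has a descent at `m` can absorb `s_m` on the
right by deleting one of its letters. -/
lemma exists_swapsProd_eq_mul_swap {m : ℕ} {l : List ℕ}
    (h : swapsProd l (m + 1) < swapsProd l m) :
    ∃ l' : List ℕ, l'.length + 1 = l.length ∧
      swapsProd l' = swapsProd l * Equiv.swap m (m + 1) := by
  induction l with
  | nil => simp at h
  | cons k l ih =>
    by_cases hdesc : swapsProd l (m + 1) < swapsProd l m
    · obtain ⟨l', hlen, hprod⟩ := ih hdesc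
      exact ⟨k :: l', by simp [← hlen], by rw [swapsProd_cons, swapsProd_cons, hprod, mul_assoc]⟩
    · have hasc : swapsProd l m < swapsProd l (m + 1) :=
        lt_of_le_of_ne (not_lt.mp hdesc) fun he => by simpa using (swapsProd l).injective he
      -- `s_k` must reverse the pair `l m < l (m+1)`, so it is the conjugate of `s_m` by `l`
      have hpair : swapsProd l m = k ∧ swapsProd l (m + 1) = k + 1 := by
        rw [swapsProd_cons, Equiv.Perm.mul_apply, Equiv.Perm.mul_apply,
          Equiv.swap_apply_def, Equiv.swap_apply_def] at h
        split_ifs at h <;> omega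
      have hconj : Equiv.swap k (k + 1) =
          swapsProd l * Equiv.swap m (m + 1) * (swapsProd l)⁻¹ := by
        rw [← Equiv.swap_apply_apply, hpair.1, hpair.2]
      refine ⟨l, by simp, ?_⟩
      rw [swapsProd_cons, hconj]
      simp [mul_assoc]

lemma exists_swapsProd_eq_of_apply_eq_min {m : ℕ} {l : List ℕ} (hge : ∀ k ∈ l, m ≤ k)
    (hmem : m ∈ l) (hfix : swapsProd l m = m) :
    ∃ l' : List ℕ, l'.length + 2 = l.length ∧ swapsProd l' = swapsProd l := by
  obtain ⟨t', s', hsplit, hnot⟩ := List.eq_append_cons_of_mem (List.mem_reverse.mpr hmem)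
  set s := s'.reverse
  set t := t'.reverse
  have hl : l = s ++ m :: t := by
    rw [← List.reverse_reverse l, hsplit]; simp [s, t]
  subst hl
  have ht : swapsProd t m = m := swapsProd_apply_of_forall_lt fun k hk =>
    lt_of_le_of_ne (hge k (by simp [hk])) fun he => hnot (by simpa [t, he] using hk)
  have hs : swapsProd s (m + 1) = m := by
    simpa [Equiv.Perm.mul_apply, ht] using hfix
  have hdesc : swapsProd s (m + 1) < swapsProd s m := by
    have hle : m ≤ swapsProd s m := le_swapsProd_apply (fun k hk => hge k (by simp [hk])) le_rfl
    have hne : swapsProd s m ≠ m := fun he => by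
      simpa using (swapsProd s).injective (he.trans hs.symm)
    omega
  obtain ⟨s₀, hlen, hprod⟩ := exists_swapsProd_eq_mul_swap hdesc
  refine ⟨s₀ ++ t, by simp [← hlen]; omega, ?_⟩
  rw [swapsProd_append, swapsProd_append, swapsProd_cons, hprod]
  group

lemma IsReducedWord.le_apply {n p : ℕ} {w : Equiv.Perm ℕ} {a : Fin p → ℕ}
    (ha : IsReducedWord w a) (hw : ∀ k < n, w k = k) (j : Fin p) : n ≤ a j := by
  by_contra! hj
  obtain ⟨j₀, -, hmin⟩ := Finset.exists_min_image Finset.univ a ⟨j, Finset.mem_univ j⟩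
  have hfix : swapsProd (List.ofFn a) (a j₀) = a j₀ := by
    rw [← wordProd_eq_swapsProd, ha.1]
    exact hw _ ((hmin j (Finset.mem_univ j)).trans_lt hj)
  obtain ⟨l, hlen, hprod⟩ := exists_swapsProd_eq_of_apply_eq_min
    (by simpa [List.mem_ofFn] using fun i => hmin i (Finset.mem_univ i))
    (List.mem_ofFn.mpr ⟨j₀, rfl⟩) hfix
  have hword : wordProd l.get = w := by
    rw [wordProd_eq_swapsProd, List.ofFn_get, hprod, ← wordProd_eq_swapsProd, ha.1]
  have := ha.2 _ _ hword
  simp at hlen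
  omega

lemma shiftP_apply_of_lt {n k : ℕ} (u : Equiv.Perm ℕ) (hk : k < n) : shiftP n u k = k := by
  simp [shiftP, hk]

lemma compatible_iff_of_lt {p : ℕ} {a b : Fin p → ℕ} (hba : ∀ j, b j < a j) :
    Compatible a b ↔ Monotone b ∧ ∀ (j : Fin p) (h : (j : ℕ) + 1 < p),
      a j < a ⟨(j : ℕ) + 1, h⟩ → b j < b ⟨(j : ℕ) + 1, h⟩ := by
  simp [Compatible, fun j => (hba j).le]

theorem stmt14_general (n p : ℕ) (u : Equiv.Perm ℕ)
    (b1 b2 : Fin p → ℕ)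
    (hmono1 : Monotone b1) (hmono2 : Monotone b2)
    (hsim : ∀ (j : Fin p) (h : (j : ℕ) + 1 < p),
      (b1 j < b1 ⟨(j : ℕ) + 1, h⟩ ↔ b2 j < b2 ⟨(j : ℕ) + 1, h⟩))
    (hbd : ∀ j, b1 j < n ∧ b2 j < n) :
    Set.ncard {a : Fin p → ℕ | IsReducedWord (shiftP n u) a ∧ Compatible a b1} =
      Set.ncard {a : Fin p → ℕ | IsReducedWord (shiftP n u) a ∧ Compatible a b2} := by
  congr 1
  ext a
  refine and_congr_right fun ha => ?_
  have hletter : ∀ j, n ≤ a j := ha.le_apply fun k hk => shiftP_apply_of_lt u hk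
  rw [compatible_iff_of_lt fun j => (hbd j).1.trans_le (hletter j),
    compatible_iff_of_lt fun j => (hbd j).2.trans_le (hletter j)]
  simp only [hmono1, hmono2, true_and]
  exact forall₂_congr fun j h => imp_congr_right fun _ => hsim j h

/-- Let `u` be a permutation, `n ≥ 1`, and `(b¹, b²)` a good-`n` pair of length
`p = ℓ(u) = ℓ(1^n × u)`: both weakly increasing, `b¹ ≤ b²` termwise, strictly increasing
at the same indices, and all entries bounded by `n` (0-indexed: `< n`).  Then in
`𝔖_{1^n × u}` the coefficients of `X_{b¹}` and `X_{b²}` agree, i.e. the numbers of pairs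
(reduced word `a`, `a`-compatible sequence equal to `bⁱ`) coincide. -/
theorem stmt14 (N n p : ℕ) (hn : 1 ≤ n) (u : Equiv.Perm ℕ)
    (hsupp : ∀ k, N ≤ k → u k = k)
    (hp : ∃ a : Fin p → ℕ, IsReducedWord (shiftP n u) a)
    (b1 b2 : Fin p → ℕ)
    (hmono1 : Monotone b1) (hmono2 : Monotone b2)
    (hle : ∀ j, b1 j ≤ b2 j)
    (hsim : ∀ (j : Fin p) (h : (j : ℕ) + 1 < p),
      (b1 j < b1 ⟨(j : ℕ) + 1, h⟩ ↔ b2 j < b2 ⟨(j : ℕ) + 1, h⟩))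
    (hbd : ∀ j, b1 j < n ∧ b2 j < n) :
    Set.ncard {a : Fin p → ℕ | IsReducedWord (shiftP n u) a ∧ Compatible a b1} =
      Set.ncard {a : Fin p → ℕ | IsReducedWord (shiftP n u) a ∧ Compatible a b2} :=
  stmt14_general n p u b1 b2 hmono1 hmono2 hsim hbd
end
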